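/- arXiv:1511.07418 — 8 statements merged into one kernel-verified Lean document; each statement's English description precedes it below -/
import Mathlib

section
/- For all integers m ≥ 1 and n ≥ 1, define R(m,n) = ∑_{i=1}^{n} ( C(m+i-2, i-1)·C(m+n-i-1, n-i) + ∑_{k=1}^{i} C(m+k-2, k-1)·C(m+n-k-1, n-k+1) ) − m·C(2m+n-2, n-1). Then R(m,n) = 0. -/
/-!
Write `m = a + 1`, `n = r + 1` and `c j = C(a + j, j)`, the coefficients of `(1 - X)^{-(a+1)}`.
The single products sum to `∑_{j ≤ r} c j * c (r - j) = C(2a + r + 1, r)`, the coefficient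
of `X^r` in `(1 - X)^{-(2a+2)}`. In the double sum the term `c l * C(a + r - l, r + 1 - l)`
occurs `r + 1 - l` times, and `(r + 1 - l) * C(a + r - l, r + 1 - l) = a * c (r - l)`, so the
double sum is `a` times the same convolution. Altogether the sum is `(a + 1) * C(2a + r + 1, r)`.
-/

open Finset PowerSeries

theorem Nat.sum_range_add_choose_mul_add_choose (a b r : ℕ) :
    ∑ j ∈ range (r + 1), (a + j).choose j * (b + (r - j)).choose (r - j)
      = (a + b + r + 1).choose r := by
  have h := congrArg (coeff r) (pow_add (mk 1 : ℤ⟦X⟧) (a + 1) (b + 1))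
  rw [show a + 1 + (b + 1) = a + b + 1 + 1 by ring, mk_one_pow_eq_mk_choose_add,
    mk_one_pow_eq_mk_choose_add, mk_one_pow_eq_mk_choose_add, coeff_mul,
    Nat.sum_antidiagonal_eq_sum_range_succ (fun i j => coeff i (mk _) * coeff j (mk _))] at h
  simp only [coeff_mk, Nat.choose_symm_add (a := a), Nat.choose_symm_add (a := b),
    Nat.choose_symm_add (a := a + b + 1)] at h
  rw [show a + b + r + 1 = a + b + 1 + r by ring]
  exact_mod_cast h.symm

theorem Finset.sum_range_sum_range_succ_eq_sum_nsmul {M : Type*} [AddCommMonoid M] (f : ℕ → M)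
    (n : ℕ) :
    ∑ j ∈ range n, ∑ l ∈ range (j + 1), f l = ∑ l ∈ range n, (n - l) • f l := by
  simp only [range_eq_Ico]
  rw [← sum_Ico_Ico_comm 0 n (fun i _ => f i)]
  simp [sum_const, Nat.card_Ico]

theorem Nat.succ_mul_add_choose_succ (a k : ℕ) :
    (k + 1) * (a + k).choose (k + 1) = a * (a + k).choose k := by
  rw [mul_comm, Nat.choose_succ_right_eq, Nat.add_sub_cancel, mul_comm]

theorem Finset.sum_Icc_one_eq_sum_range {M : Type*} [AddCommMonoid M] (f : ℕ → M) (n : ℕ) :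
    ∑ i ∈ Icc 1 n, f i = ∑ j ∈ range n, f (j + 1) := by
  rw [← Ico_add_one_right_eq_Icc, sum_Ico_eq_sum_range, Nat.add_sub_cancel]
  simp only [add_comm]

theorem sum_range_choose_mul_choose_add_sum_eq_succ_mul_choose (a r : ℕ) :
    ∑ j ∈ range (r + 1), ((a + j).choose j * (a + (r - j)).choose (r - j)
      + ∑ l ∈ range (j + 1), (a + l).choose l * (a + (r - l)).choose (r + 1 - l))
    = (a + 1) * (2 * a + r + 1).choose r := by
  have vandermonde : ∑ j ∈ range (r + 1), (a + j).choose j * (a + (r - j)).choose (r - j)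
      = (2 * a + r + 1).choose r := by
    rw [Nat.sum_range_add_choose_mul_add_choose, two_mul]
  have absorption : ∀ l ∈ range (r + 1),
      (r + 1 - l) • ((a + l).choose l * (a + (r - l)).choose (r + 1 - l))
        = a * ((a + l).choose l * (a + (r - l)).choose (r - l)) := by
    intro l hl
    rw [show r + 1 - l = r - l + 1 by grind, smul_eq_mul, mul_left_comm,
      Nat.succ_mul_add_choose_succ, mul_left_comm]
  rw [sum_add_distrib, sum_range_sum_range_succ_eq_sum_nsmul, sum_congr rfl absorption,
    ← mul_sum, vandermonde]
  ring

/-- For `m, n ≥ 1`,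
`R(m,n) = ∑_{i=1}^{n} ( C(m+i-2,i-1)·C(m+n-i-1,n-i)
            + ∑_{k=1}^{i} C(m+k-2,k-1)·C(m+n-k-1,n-k+1) ) − m·C(2m+n-2,n-1) = 0`. -/
theorem stmt_1 (m n : ℕ) (hm : 1 ≤ m) (hn : 1 ≤ n) :
    (∑ i ∈ Finset.Icc 1 n,
        ((Nat.choose (m + i - 2) (i - 1) * Nat.choose (m + n - i - 1) (n - i) : ℤ)
          + ∑ k ∈ Finset.Icc 1 i,
              (Nat.choose (m + k - 2) (k - 1) * Nat.choose (m + n - k - 1) (n - k + 1) : ℤ)))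
      - (m : ℤ) * Nat.choose (2 * m + n - 2) (n - 1) = 0 := by
  obtain ⟨a, rfl⟩ : ∃ a, m = a + 1 := ⟨m - 1, by omega⟩
  obtain ⟨r, rfl⟩ : ∃ r, n = r + 1 := ⟨n - 1, by omega⟩
  rw [sub_eq_zero]
  norm_cast
  rw [show 2 * (a + 1) + (r + 1) - 2 = 2 * a + r + 1 by omega, Nat.add_sub_cancel,
    ← sum_range_choose_mul_choose_add_sum_eq_succ_mul_choose, sum_Icc_one_eq_sum_range]
  refine sum_congr rfl fun j hj => ?_
  rw [mem_range] at hj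
  rw [sum_Icc_one_eq_sum_range]
  congr 1
  · congr 2 <;> omega
  · refine sum_congr rfl fun l hl => ?_
    rw [mem_range] at hl
    congr 2 <;> omega
end

section
/- For all integers m ≥ 1 and n ≥ 1, C(2m+n-2, n-1) + ∑_{k=1}^{n} (n−k+1)·C(m+k-2, k-1)·C(m+n-k-1, n-k+1) = m·C(2m+n-2, n-1). -/
open Finset

lemma aux (b : ℕ) : ∀ s a : ℕ,
    ∑ j ∈ range (s + 1), (a + j).choose j * (b + (s - j)).choose (s - j)
      = (a + b + s + 1).choose s := by
  induction b with
  | zero =>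
    intro s
    induction s with
    | zero => intro a; simp
    | succ s ih =>
      intro a
      rw [Finset.sum_range_succ]
      have h1 : ∑ j ∈ range (s+1), (a + j).choose j * (0 + (s + 1 - j)).choose (s + 1 - j)
          = ∑ j ∈ range (s+1), (a + j).choose j * (0 + (s - j)).choose (s - j) := by
        apply Finset.sum_congr rfl; intro j hj; simp
      rw [h1, ih a]
      have h2 : a + 0 + (s+1) + 1 = (a + 0 + s + 1) + 1 := by ring
      rw [h2, Nat.choose_succ_succ]
      simp
      congr 1
  | succ b ihb =>
    intro s
    induction s with
    | zero => intro a; simp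
    | succ s ihs =>
      intro a
      have key : ∀ j ∈ range (s+1),
          (a + j).choose j * (b + 1 + (s + 1 - j)).choose (s + 1 - j)
            = (a + j).choose j * (b + 1 + (s - j)).choose (s - j)
              + (a + j).choose j * (b + (s + 1 - j)).choose (s + 1 - j) := by
        intro j hj
        simp only [Finset.mem_range, Nat.lt_succ_iff] at hj
        have h2 : s + 1 - j = (s - j) + 1 := by omega
        have h3 : b + 1 + (s - j + 1) = (b + 1 + (s - j)) + 1 := by ring
        have h4 : b + 1 + (s - j) = b + (s - j + 1) := by ring
        rw [h2, h3, Nat.choose_succ_succ, mul_add, h4]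
      rw [Finset.sum_range_succ, Finset.sum_congr rfl key, Finset.sum_add_distrib, ihs a]
      have h5 := ihb (s+1) a
      rw [Finset.sum_range_succ] at h5
      simp only [Nat.sub_self, Nat.add_zero, Nat.choose_zero_right, Nat.mul_one] at h5 ⊢
      have e1 : a + (b + 1) + s + 1 = a + b + (s + 1) + 1 := by ring
      have e2 : a + (b + 1) + (s + 1) + 1 = (a + b + (s + 1) + 1) + 1 := by ring
      rw [add_assoc, h5, e2]
      conv_rhs => rw [Nat.choose_succ_succ]
      rw [e1]




/-- For `m, n ≥ 1`,
`C(2m+n-2,n-1) + ∑_{k=1}^{n} (n−k+1)·C(m+k-2,k-1)·C(m+n-k-1,n-k+1) = m·C(2m+n-2,n-1)`. -/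
theorem stmt_2 (m n : ℕ) (hm : 1 ≤ m) (hn : 1 ≤ n) :
    Nat.choose (2 * m + n - 2) (n - 1)
      + ∑ k ∈ Finset.Icc 1 n,
          (n - k + 1) * (Nat.choose (m + k - 2) (k - 1) * Nat.choose (m + n - k - 1) (n - k + 1))
      = m * Nat.choose (2 * m + n - 2) (n - 1) := by
  obtain ⟨a, rfl⟩ : ∃ a, m = a + 1 := ⟨m - 1, by omega⟩
  obtain ⟨s, rfl⟩ : ∃ s, n = s + 1 := ⟨n - 1, by omega⟩
  have hsum : ∑ k ∈ Finset.Icc 1 (s + 1),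
      (s + 1 - k + 1) * (Nat.choose (a + 1 + k - 2) (k - 1)
        * Nat.choose (a + 1 + (s + 1) - k - 1) (s + 1 - k + 1))
      = a * (a + a + s + 1).choose s := by
    rw [← Finset.Ico_add_one_right_eq_Icc, Finset.sum_Ico_eq_sum_range]
    have hcg : ∀ j ∈ range (s + 1 + 1 - 1),
        (s + 1 - (1 + j) + 1) * (Nat.choose (a + 1 + (1 + j) - 2) ((1 + j) - 1)
          * Nat.choose (a + 1 + (s + 1) - (1 + j) - 1) (s + 1 - (1 + j) + 1))
        = a * ((a + j).choose j * (a + (s - j)).choose (s - j)) := by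
      intro j hj
      simp only [Finset.mem_range] at hj
      have hjs : j ≤ s := by omega
      have e1 : s + 1 - (1 + j) + 1 = (s - j) + 1 := by omega
      have e2 : a + 1 + (1 + j) - 2 = a + j := by omega
      have e3 : (1 + j) - 1 = j := by omega
      have e4 : a + 1 + (s + 1) - (1 + j) - 1 = a + (s - j) := by omega
      rw [e1, e2, e3, e4]
      have h6 := Nat.choose_succ_right_eq (a + (s - j)) (s - j)
      have e5 : a + (s - j) - (s - j) = a := by omega
      rw [e5] at h6
      calc (s - j + 1) * ((a + j).choose j * (a + (s - j)).choose (s - j + 1))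
          = (a + j).choose j * ((a + (s - j)).choose (s - j + 1) * (s - j + 1)) := by ring
        _ = (a + j).choose j * ((a + (s - j)).choose (s - j) * a) := by rw [h6]
        _ = a * ((a + j).choose j * (a + (s - j)).choose (s - j)) := by ring
    rw [Finset.sum_congr rfl hcg, ← Finset.mul_sum]
    have : s + 1 + 1 - 1 = s + 1 := by omega
    rw [this, aux a s a]
  rw [hsum]
  have e6 : 2 * (a + 1) + (s + 1) - 2 = a + a + s + 1 := by omega
  have e7 : s + 1 - 1 = s := by omega
  rw [e6, e7]
  ring
end

section
/- Let m ≥ 2, n ≥ 2 be integers. Define, for 0 ≤ i ≤ n, A_i = i(n−i) + (C(m+n−2, m−1) + C(m+n−1, m))·((m−1)n + i) + ∑_{j=1}^{i} (1 + (m−1)(i−j+1)/(n−j+1))·C(m+j−2, m−1)·C(m+n−j−1, m−1) and B_i = −m(m−1)·C(m+n−2, m) + (1 + C(m+n−2, m−1))·((m−1)n + i). Then the sequence ((A_i + 1)/B_i)_{0 ≤ i ≤ n} attains its maximum at i = 0 or at i = n; in particular max{(A_i+1)/B_i : 1 ≤ i ≤ n−1} ≤ max{(A_0+1)/B_0, (A_n+1)/B_n}.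 -/
/-!
`A_i` is discretely convex in `i` and `B_i` is affine and positive, so for `t` the larger of the
two endpoint ratios, `A_i + 1 - t B_i` is convex and nonpositive at `i = 0` and `i = n`, hence
nonpositive in between.

Convexity of `A`: the term `i(n-i)` contributes `-2` to the second difference and the linear term
nothing. The weights of the sum are affine in `i`, so the sum contributes only its new top terms,
which reduce to `(m-1)/(i+1) · C(m+i-1,m-1) C(m+n-i-2,m-1)`; this is at least `2` because
`C(m+j-2,m-1) ≥ j` and `C(m+n-j-1,m-1) ≥ m` for `1 ≤ j < n`.
-/

/-- The quantity `A_i` of Theorem 1.4 (for the groups `Δ_{m,n}`), as a rational number. -/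
def A4 (m n i : ℕ) : ℚ :=
  (i : ℚ) * ((n : ℚ) - i)
    + ((Nat.choose (m + n - 2) (m - 1) : ℚ) + (Nat.choose (m + n - 1) m : ℚ))
        * (((m : ℚ) - 1) * n + i)
    + ∑ j ∈ Finset.Icc 1 i,
        (1 + ((m : ℚ) - 1) * ((i : ℚ) - j + 1) / ((n : ℚ) - j + 1))
          * (Nat.choose (m + j - 2) (m - 1) : ℚ) * (Nat.choose (m + n - j - 1) (m - 1) : ℚ)

/-- The quantity `B_i` of Theorem 1.4, as a rational number. -/
def B4 (m n i : ℕ) : ℚ :=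
  -(m : ℚ) * ((m : ℚ) - 1) * (Nat.choose (m + n - 2) m : ℚ)
    + (1 + (Nat.choose (m + n - 2) (m - 1) : ℚ)) * (((m : ℚ) - 1) * n + i)

section DiscreteConvexity

variable {K : Type*} [Field K] [LinearOrder K] [IsStrictOrderedRing K]

theorem le_max_of_two_mul_le_add (g : ℕ → K) (n : ℕ)
    (hg : ∀ i, i + 2 ≤ n → 2 * g (i + 1) ≤ g i + g (i + 2)) {i : ℕ} (hi : i ≤ n) :
    g i ≤ max (g 0) (g n) := by
  have hincr : ∀ k l, k ≤ l → l < n → g (k + 1) - g k ≤ g (l + 1) - g l := by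
    intro k l hkl
    induction l, hkl using Nat.le_induction with
    | base => exact fun _ => le_rfl
    | succ l _ ih => intro hl; linarith [ih (by omega), hg l (by omega)]
  by_cases hdown : ∀ k < i, g (k + 1) ≤ g k
  · refine le_max_of_le_left ?_
    have hbelow : ∀ k ≤ i, g k ≤ g 0 := by
      intro k hk
      induction k with
      | zero => exact le_rfl
      | succ k ih => exact (hdown k (by omega)).trans (ih (by omega))
    exact hbelow i le_rfl
  · push Not at hdown
    obtain ⟨k, hki, hup⟩ := hdown
    refine le_max_of_le_right ?_
    have habove : ∀ l, i ≤ l → l ≤ n → g i ≤ g l := by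
      intro l hil
      induction l, hil using Nat.le_induction with
      | base => exact fun _ => le_rfl
      | succ l hil ih =>
        intro hl
        linarith [ih (by omega), hincr k l (by omega) (by omega)]
    exact habove n hi le_rfl

theorem div_le_max_of_two_mul_le_add (f b : ℕ → K) (n : ℕ)
    (hf : ∀ i, i + 2 ≤ n → 2 * f (i + 1) ≤ f i + f (i + 2))
    (hb : ∀ i, i + 2 ≤ n → b i + b (i + 2) = 2 * b (i + 1))
    (hb_pos : ∀ i ≤ n, 0 < b i) {i : ℕ} (hi : i ≤ n) :
    f i / b i ≤ max (f 0 / b 0) (f n / b n) := by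
  set t := max (f 0 / b 0) (f n / b n)
  have hg := le_max_of_two_mul_le_add (fun i => f i - t * b i) n
    (fun i hi => by linear_combination hf i hi + t * hb i hi) hi
  have h0 : f 0 - t * b 0 ≤ 0 := by
    have := (div_le_iff₀ (hb_pos 0 (Nat.zero_le n))).1 (le_max_left _ _ : f 0 / b 0 ≤ t)
    linarith
  have hn : f n - t * b n ≤ 0 := by
    have := (div_le_iff₀ (hb_pos n le_rfl)).1 (le_max_right _ _ : f n / b n ≤ t)
    linarith
  rw [div_le_iff₀ (hb_pos i hi)]
  linarith [hg.trans (max_le h0 hn)]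

end DiscreteConvexity

section WeightedPrefixSum

variable {K : Type*} [Field K]

def weightedPrefixSum (a b : K) (p : ℕ → K) (i : ℕ) : K :=
  ∑ j ∈ Finset.Icc 1 i, (1 + a * ((i : K) - j + 1) / (b - j + 1)) * p j

theorem weightedPrefixSum_add_two (a b : K) (p : ℕ → K) (i : ℕ) :
    weightedPrefixSum a b p i + weightedPrefixSum a b p (i + 2) =
      2 * weightedPrefixSum a b p (i + 1) + (1 + a / (b - i - 1)) * p (i + 2) - p (i + 1) := by
  have hmiddle : ∑ j ∈ Finset.Icc 1 i, (1 + a * ((i : K) - j + 1) / (b - j + 1)) * p j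
      + ∑ j ∈ Finset.Icc 1 i, (1 + a * (((i + 2 : ℕ) : K) - j + 1) / (b - j + 1)) * p j
      = 2 * ∑ j ∈ Finset.Icc 1 i, (1 + a * (((i + 1 : ℕ) : K) - j + 1) / (b - j + 1)) * p j := by
    rw [← Finset.sum_add_distrib, Finset.mul_sum]
    exact Finset.sum_congr rfl fun j _ => by push_cast; ring
  simp only [weightedPrefixSum, Finset.sum_Icc_succ_top (by omega : 1 ≤ i + 1),
    Finset.sum_Icc_succ_top (by omega : 1 ≤ i + 1 + 1)]
  push_cast at hmiddle ⊢
  linear_combination hmiddle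

end WeightedPrefixSum

theorem Nat.succ_le_choose_add {a : ℕ} (b : ℕ) (ha : 1 ≤ a) : b + 1 ≤ (a + b).choose b :=
  (Nat.choose_succ_self_right b).symm.le.trans (Nat.choose_le_choose b (by omega))

def chooseProduct (m n j : ℕ) : ℕ :=
  (m + j - 2).choose (m - 1) * (m + n - j - 1).choose (m - 1)

theorem chooseProduct_succ_mul {m n j : ℕ} (hm : 1 ≤ m) (hj : 1 ≤ j) (hjn : j < n) :
    chooseProduct m n (j + 1) * (j * (m + n - j - 1)) =
      chooseProduct m n j * ((m + j - 1) * (n - j)) := by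
  have hc := Nat.choose_mul_succ_eq (m + j - 2) (m - 1)
  rw [show m + j - 2 + 1 = m + (j + 1) - 2 by omega,
    show m + (j + 1) - 2 - (m - 1) = j by omega] at hc
  have hd := Nat.choose_mul_succ_eq (m + n - (j + 1) - 1) (m - 1)
  rw [show m + n - (j + 1) - 1 + 1 = m + n - j - 1 by omega,
    show m + n - j - 1 - (m - 1) = n - j by omega] at hd
  simp only [chooseProduct]
  calc _ = ((m + (j + 1) - 2).choose (m - 1) * j) *
        ((m + n - (j + 1) - 1).choose (m - 1) * (m + n - j - 1)) := by ring
    _ = ((m + j - 2).choose (m - 1) * (m + (j + 1) - 2)) *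
        ((m + n - j - 1).choose (m - 1) * (n - j)) := by rw [hc, hd]
    _ = _ := by rw [show m + (j + 1) - 2 = m + j - 1 by omega]; ring

theorem two_mul_le_chooseProduct {m n j : ℕ} (hm : 2 ≤ m) (hj : 1 ≤ j) (hjn : j < n) :
    2 * j ≤ (m - 1) * chooseProduct m n j := by
  have hc : j ≤ (m + j - 2).choose (m - 1) := by
    have := Nat.succ_le_choose_add (j - 1) (show 1 ≤ m - 1 by omega)
    rwa [← Nat.choose_symm_add, show m - 1 + (j - 1) = m + j - 2 by omega,
      Nat.sub_add_cancel hj] at this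
  have hd : 2 ≤ (m + n - j - 1).choose (m - 1) := by
    have := Nat.succ_le_choose_add (m - 1) (show 1 ≤ n - j by omega)
    rw [show n - j + (m - 1) = m + n - j - 1 by omega] at this
    omega
  calc 2 * j = 1 * (j * 2) := by ring
    _ ≤ (m - 1) * chooseProduct m n j :=
      Nat.mul_le_mul (by omega) (Nat.mul_le_mul hc hd)

theorem two_le_chooseProduct_jump {m n i : ℕ} (hm : 2 ≤ m) (hin : i + 2 ≤ n) :
    2 ≤ (1 + ((m : ℚ) - 1) / ((n : ℚ) - i - 1)) * chooseProduct m n (i + 2)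
      - chooseProduct m n (i + 1) := by
  obtain ⟨u, rfl⟩ : ∃ u, n = i + 2 + u := ⟨n - (i + 2), by omega⟩
  have hstep := chooseProduct_succ_mul (n := i + 2 + u) (j := i + 1)
    (by omega : 1 ≤ m) (by omega) (by omega)
  rw [show m + (i + 2 + u) - (i + 1) - 1 = m + u by omega,
    show m + (i + 1) - 1 = m + i by omega, show i + 2 + u - (i + 1) = u + 1 by omega] at hstep
  have hbound := two_mul_le_chooseProduct (n := i + 2 + u) (j := i + 1) hm (by omega) (by omega)
  set P := chooseProduct m (i + 2 + u) (i + 1)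
  set Q := chooseProduct m (i + 2 + u) (i + 2)
  have hstepQ : (Q : ℚ) * ((i + 1) * (m + u)) = P * ((m + i) * (u + 1)) := by
    exact_mod_cast hstep
  have hboundQ : 2 * ((i : ℚ) + 1) ≤ ((m : ℚ) - 1) * P := by
    have := (Nat.cast_le (α := ℚ)).2 hbound
    push_cast [Nat.cast_sub (by omega : 1 ≤ m)] at this
    exact this
  have hjump : (1 + ((m : ℚ) - 1) / (((i + 2 + u : ℕ) : ℚ) - i - 1)) * Q - P
      = ((m : ℚ) - 1) * P / (i + 1) := by
    push_cast
    rw [show (i : ℚ) + 2 + u - i - 1 = u + 1 by ring]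
    field_simp
    linear_combination hstepQ
  rw [hjump, le_div_iff₀ (by positivity)]
  linarith

theorem B4_eq (m n i : ℕ) (hm : 1 ≤ m) (hn : 1 ≤ n) :
    B4 m n i = ((m : ℚ) - 1) * n + i + (m + n - 2).choose (m - 1) * ((m : ℚ) - 1 + i) := by
  have h := Nat.choose_succ_right_eq (m + n - 2) (m - 1)
  rw [Nat.sub_add_cancel hm, show m + n - 2 - (m - 1) = n - 1 by omega] at h
  have hq : ((m + n - 2).choose m : ℚ) * m = (m + n - 2).choose (m - 1) * ((n : ℚ) - 1) := by
    exact_mod_cast h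
  unfold B4
  linear_combination (-(m : ℚ) + 1) * hq

theorem B4_pos (m n i : ℕ) (hm : 2 ≤ m) (hn : 1 ≤ n) : 0 < B4 m n i := by
  rw [B4_eq m n i (by omega) hn]
  have : (1 : ℚ) ≤ m - 1 := by
    rw [le_sub_iff_add_le]; exact_mod_cast hm
  have : (1 : ℚ) ≤ n := by exact_mod_cast hn
  positivity

theorem B4_add_two (m n i : ℕ) : B4 m n i + B4 m n (i + 2) = 2 * B4 m n (i + 1) := by
  unfold B4; push_cast; ring

theorem A4_eq (m n i : ℕ) :
    A4 m n i = i * ((n : ℚ) - i)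
      + ((m + n - 2).choose (m - 1) + (m + n - 1).choose m : ℚ) * (((m : ℚ) - 1) * n + i)
      + weightedPrefixSum ((m : ℚ) - 1) n (fun j => chooseProduct m n j) i := by
  unfold A4 weightedPrefixSum chooseProduct
  push_cast
  simp only [mul_assoc]

theorem A4_two_mul_le_add {m n i : ℕ} (hm : 2 ≤ m) (hin : i + 2 ≤ n) :
    2 * A4 m n (i + 1) ≤ A4 m n i + A4 m n (i + 2) := by
  have hsum := weightedPrefixSum_add_two ((m : ℚ) - 1) n (fun j => (chooseProduct m n j : ℚ)) i
  have hjump := two_le_chooseProduct_jump hm hin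
  rw [A4_eq, A4_eq, A4_eq]
  push_cast
  linear_combination hjump - hsum

/-- For `m, n ≥ 2`, the sequence `((A_i+1)/B_i)_{0 ≤ i ≤ n}` attains its maximum at
`i = 0` or `i = n`; in particular every term with `1 ≤ i ≤ n−1` is bounded by
`max{(A_0+1)/B_0, (A_n+1)/B_n}`. -/
theorem stmt_4 (m n : ℕ) (hm : 2 ≤ m) (hn : 2 ≤ n) :
    (∀ i : ℕ, i ≤ n →
      (A4 m n i + 1) / B4 m n i ≤ max ((A4 m n 0 + 1) / B4 m n 0) ((A4 m n n + 1) / B4 m n n)) ∧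
    (∀ i : ℕ, 1 ≤ i → i ≤ n - 1 →
      (A4 m n i + 1) / B4 m n i ≤ max ((A4 m n 0 + 1) / B4 m n 0) ((A4 m n n + 1) / B4 m n n)) := by
  have hratio : ∀ i ≤ n, (A4 m n i + 1) / B4 m n i ≤
      max ((A4 m n 0 + 1) / B4 m n 0) ((A4 m n n + 1) / B4 m n n) := fun i hi =>
    div_le_max_of_two_mul_le_add (fun i => A4 m n i + 1) (B4 m n) n
      (fun i hi => by linarith [A4_two_mul_le_add hm hi]) (fun i _ => B4_add_two m n i)
      (fun i _ => B4_pos m n i hm (by omega)) hi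
  exact ⟨hratio, fun i _ hi => hratio i (by omega)⟩
end

section
/- Let n ≥ 2, let W = Sym(n) with length function ℓ, simple roots α_1,…,α_{n−1}, and for w ∈ W let ν_i(w) = 1 if α_i ∈ w(Φ⁻) and 0 otherwise. Let X_1,…,X_{n−1}, X̃_0, X̃_n be formal variables (or elements of a field) and define Z = ( ∑_{w∈W} q^{−ℓ(w)} ∏_{i=1}^{n−1} X_i^{ν_i(w)} ) / ( ∏_{i=1}^{n−1}(1−X_i) · (1−X̃_0)(1−X̃_n) ). Then substituting q → q^{−1} and X_i → X_i^{−1} (for all i, including X̃_0 → X̃_0^{−1}, X̃_n → X̃_n^{−1}) yields Z → (−1)^{n−1}·q^{n(n−1)/2}·X̃_0·X̃_n·Z. -/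
/-!
Right multiplication by the longest element `w₀` (reversal of `Fin n`) is an involution of
`Sym(n)` that turns the inversions of `w` into the non-inversions, so
`ℓ(w w₀) = n(n-1)/2 - ℓ(w)`, and flips every descent, so `ν_i(w w₀) = 1 - ν_i(w)`.
Reindexing the numerator of `Z` by `w ↦ w w₀` therefore pulls out `q^{n(n-1)/2} ∏ X_i⁻¹`,
while every factor `1 - X⁻¹` of the denominator is `(1 - X) / (-X)`.
-/

open Finset

/-- The length (number of inversions) of a permutation of `Fin n`, i.e. the Coxeter length
in the Weyl group `Sym(n)`. -/
def permLength (n : ℕ) (w : Equiv.Perm (Fin n)) : ℕ :=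
  (Finset.univ.filter (fun p : Fin n × Fin n => p.1 < p.2 ∧ w p.2 < w p.1)).card

/-- `ν_i(w) = 1` if the simple root `α_i = e_i − e_{i+1}` (1-based `i`) lies in `w(Φ⁻)`,
equivalently `w⁻¹(i) > w⁻¹(i+1)`, and `ν_i(w) = 0` otherwise. -/
def nu (n : ℕ) (w : Equiv.Perm (Fin n)) (i : ℕ) : ℕ :=
  if h : 1 ≤ i ∧ i + 1 ≤ n then
    (if w.symm ⟨i, by omega⟩ < w.symm ⟨i - 1, by omega⟩ then 1 else 0)
  else 0

/-- The Igusa-type Weyl-group sum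
`Z = (∑_{w∈Sym(n)} q^{−ℓ(w)} ∏_{i=1}^{n−1} X_i^{ν_i(w)}) /
     (∏_{i=1}^{n−1}(1−X_i)·(1−X̃_0)(1−X̃_n))`
with values in a field `F`. -/
noncomputable def igusaZ (F : Type*) [Field F] (n : ℕ) (q : F) (X : ℕ → F) (X0 Xn : F) : F :=
  (∑ w : Equiv.Perm (Fin n), q⁻¹ ^ (permLength n w) * ∏ i ∈ Finset.Icc 1 (n - 1), (X i) ^ (nu n w i))
    / ((∏ i ∈ Finset.Icc 1 (n - 1), (1 - X i)) * ((1 - X0) * (1 - Xn)))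

lemma inv_pow_eq_inv_pow_mul_pow_sub {G₀ : Type*} [CommGroupWithZero G₀] {x : G₀} (hx : x ≠ 0)
    {e k : ℕ} (hek : e ≤ k) : x⁻¹ ^ e = x⁻¹ ^ k * x ^ (k - e) := by
  rw [pow_sub₀ x hx hek, inv_pow, inv_pow, inv_mul_cancel_left₀ (pow_ne_zero k hx)]

lemma one_sub_inv_eq_div_neg {K : Type*} [Field K] {x : K} (hx : x ≠ 0) :
    1 - x⁻¹ = (1 - x) / -x := by
  field_simp
  ring

lemma prod_one_sub_inv {ι K : Type*} [Field K] (s : Finset ι) {x : ι → K}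
    (hx : ∀ i ∈ s, x i ≠ 0) :
    ∏ i ∈ s, (1 - (x i)⁻¹) = (∏ i ∈ s, (1 - x i)) / ((-1) ^ #s * ∏ i ∈ s, x i) := by
  rw [prod_congr rfl fun i hi => one_sub_inv_eq_div_neg (hx i hi), prod_div_distrib, prod_neg]

lemma permLength_mul_revPerm (n : ℕ) (w : Equiv.Perm (Fin n)) :
    permLength n (w * Fin.revPerm) = #{p : Fin n × Fin n | p.1 < p.2 ∧ w p.1 < w p.2} := by
  refine card_nbij' (fun p => (p.2.rev, p.1.rev)) (fun p => (p.2.rev, p.1.rev)) ?_ ?_ ?_ ?_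
  · intro p hp
    simp only [mem_coe, mem_filter, mem_univ, true_and, Equiv.Perm.mul_apply,
      Fin.revPerm_apply] at hp ⊢
    exact ⟨Fin.rev_lt_rev.mpr hp.1, hp.2⟩
  · intro p hp
    simp only [mem_coe, mem_filter, mem_univ, true_and, Equiv.Perm.mul_apply,
      Fin.revPerm_apply, Fin.rev_rev] at hp ⊢
    exact ⟨Fin.rev_lt_rev.mpr hp.1, hp.2⟩
  · intro p _; simp
  · intro p _; simp

lemma permLength_mul_revPerm_add_permLength (n : ℕ) (w : Equiv.Perm (Fin n)) :
    permLength n (w * Fin.revPerm) + permLength n w = n * (n - 1) / 2 := by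
  have hnoninv : #{p : Fin n × Fin n | p.1 < p.2 ∧ w p.1 < w p.2}
      = #{p ∈ ({p : Fin n × Fin n | p.1 < p.2} : Finset _) | ¬ w p.2 < w p.1} := by
    rw [filter_filter]
    congr 1
    refine filter_congr fun p _ => and_congr_right fun hp => ?_
    rw [not_lt]
    exact ⟨le_of_lt, fun h => h.lt_of_ne (w.injective.ne hp.ne)⟩
  rw [permLength_mul_revPerm, hnoninv, permLength, add_comm, ← filter_filter,
    card_filter_add_card_filter_not, Fintype.card_product_filter_lt, Fintype.card_fin,
    Nat.choose_two_right]

lemma nu_le_one (n : ℕ) (w : Equiv.Perm (Fin n)) (i : ℕ) : nu n w i ≤ 1 := by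
  unfold nu; split_ifs <;> simp

lemma nu_mul_revPerm (n : ℕ) (w : Equiv.Perm (Fin n)) {i : ℕ} (hi : i ∈ Icc 1 (n - 1)) :
    nu n (w * Fin.revPerm) i = 1 - nu n w i := by
  have h : 1 ≤ i ∧ i + 1 ≤ n := by rw [mem_Icc] at hi; omega
  have hsymm : ∀ a, (w * Fin.revPerm).symm a = (w.symm a).rev := fun _ => rfl
  have hne : w.symm ⟨i, by omega⟩ ≠ w.symm ⟨i - 1, by omega⟩ :=
    w.symm.injective.ne (by simp [Fin.ext_iff]; omega)
  unfold nu
  rw [dif_pos h, dif_pos h]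
  simp only [hsymm, Fin.rev_lt_rev]
  rcases hne.lt_or_gt with hlt | hlt <;> simp [hlt, hlt.not_gt]

noncomputable def weylNumerator (F : Type*) [Field F] (n : ℕ) (q : F) (X : ℕ → F) : F :=
  ∑ w : Equiv.Perm (Fin n), q⁻¹ ^ permLength n w * ∏ i ∈ Icc 1 (n - 1), X i ^ nu n w i

lemma igusaZ_eq (F : Type*) [Field F] (n : ℕ) (q : F) (X : ℕ → F) (X0 Xn : F) :
    igusaZ F n q X X0 Xn
      = weylNumerator F n q X / ((∏ i ∈ Icc 1 (n - 1), (1 - X i)) * ((1 - X0) * (1 - Xn))) :=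
  rfl

lemma weylNumerator_inv (F : Type*) [Field F] (n : ℕ) {q : F} (hq : q ≠ 0) {X : ℕ → F}
    (hX : ∀ i ∈ Icc 1 (n - 1), X i ≠ 0) :
    weylNumerator F n q⁻¹ (fun i => (X i)⁻¹)
      = q ^ (n * (n - 1) / 2) * (∏ i ∈ Icc 1 (n - 1), X i)⁻¹ * weylNumerator F n q X := by
  rw [weylNumerator, weylNumerator, mul_sum]
  refine Fintype.sum_equiv (Equiv.mulRight Fin.revPerm) _ _ fun w => ?_
  have hlen := permLength_mul_revPerm_add_permLength n w
  have hq' : q ^ permLength n w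
      = q ^ (n * (n - 1) / 2) * q⁻¹ ^ permLength n (w * Fin.revPerm) := by
    have h := inv_pow_eq_inv_pow_mul_pow_sub (inv_ne_zero hq) (e := permLength n w)
      (k := n * (n - 1) / 2) (by omega)
    rwa [inv_inv, show n * (n - 1) / 2 - permLength n w = permLength n (w * Fin.revPerm) by
      omega] at h
  have hX' : ∏ i ∈ Icc 1 (n - 1), (X i)⁻¹ ^ nu n w i
      = (∏ i ∈ Icc 1 (n - 1), X i)⁻¹
        * ∏ i ∈ Icc 1 (n - 1), X i ^ nu n (w * Fin.revPerm) i := by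
    rw [← prod_inv_distrib, ← prod_mul_distrib]
    refine prod_congr rfl fun i hi => ?_
    rw [nu_mul_revPerm n w hi]
    simpa using inv_pow_eq_inv_pow_mul_pow_sub (hX i hi) (nu_le_one n w i)
  simp only [inv_inv, Equiv.coe_mulRight, hq', hX']
  ring

theorem stmt_8_general (F : Type*) [Field F] (n : ℕ)
    (q : F) (X : ℕ → F) (X0 Xn : F)
    (hq : q ≠ 0) (hX : ∀ i ∈ Finset.Icc 1 (n - 1), X i ≠ 0) (hX0 : X0 ≠ 0) (hXn : Xn ≠ 0) :
    igusaZ F n q⁻¹ (fun i => (X i)⁻¹) X0⁻¹ Xn⁻¹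
      = (-1) ^ (n - 1) * q ^ (n * (n - 1) / 2) * X0 * Xn * igusaZ F n q X X0 Xn := by
  have hden : (∏ i ∈ Icc 1 (n - 1), (1 - (X i)⁻¹)) * ((1 - X0⁻¹) * (1 - Xn⁻¹))
      = (∏ i ∈ Icc 1 (n - 1), (1 - X i)) * ((1 - X0) * (1 - Xn))
        / ((-1) ^ (n - 1) * (∏ i ∈ Icc 1 (n - 1), X i) * (-X0) * (-Xn)) := by
    rw [prod_one_sub_inv _ hX, Nat.card_Icc, Nat.add_sub_cancel, one_sub_inv_eq_div_neg hX0,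
      one_sub_inv_eq_div_neg hXn]
    ring
  have hP : ∏ i ∈ Icc 1 (n - 1), X i ≠ 0 := prod_ne_zero_iff.mpr hX
  rw [igusaZ_eq, igusaZ_eq, weylNumerator_inv F n hq hX, hden, div_div_eq_mul_div,
    mul_div_assoc']
  congr 1
  field_simp

/-- Functional-equation symmetry: substituting `q → q⁻¹`, `X_i → X_i⁻¹`, `X̃_0 → X̃_0⁻¹`,
`X̃_n → X̃_n⁻¹` in `Z` yields `(−1)^{n−1}·q^{n(n−1)/2}·X̃_0·X̃_n·Z`. -/
theorem stmt_8 (F : Type*) [Field F] (n : ℕ) (hn : 2 ≤ n)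
    (q : F) (X : ℕ → F) (X0 Xn : F)
    (hq : q ≠ 0) (hX : ∀ i ∈ Finset.Icc 1 (n - 1), X i ≠ 0) (hX0 : X0 ≠ 0) (hXn : Xn ≠ 0)
    (hX1 : ∀ i ∈ Finset.Icc 1 (n - 1), X i ≠ 1) (hX01 : X0 ≠ 1) (hXn1 : Xn ≠ 1) :
    igusaZ F n q⁻¹ (fun i => (X i)⁻¹) X0⁻¹ Xn⁻¹
      = (-1) ^ (n - 1) * q ^ (n * (n - 1) / 2) * X0 * Xn * igusaZ F n q X X0 Xn :=
  stmt_8_general F n q X X0 Xn hq hX hX0 hXn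
end

section
/- For every integer n ≥ 1 and prime p, the rational-function identity ( ∑_{w∈Sym(n)} p^{−ℓ(w)} ∏_{i=1}^{n−1} (p^{i(n−i)−it})^{ν_i(w)} ) / ( ∏_{i=1}^{n} (1 − p^{i(n−i)−it}) ) = 1 / ∏_{i=1}^{n} (1 − p^{i−1−t}) holds, where ℓ is the length function of Sym(n) and ν_i(w)=1 if the simple root α_i lies in w(Φ⁻), else 0. -/
open Finset

/-!
Put `x = p ^ (-t)` and `v = w⁻¹`; then `ν_i(w)` is the descent indicator of `v` at `i`, and the
numerator is `∑_v p^{-ℓ(v)} ∏_{i descent of v} p^{i(n-i)} x^i`. Let `ρ` act on values by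
`a ↦ a - 1` cyclically. If `v(q) = 0` with `q` not the last point, passing from `v` to `ρ v`
removes the inversions `(a, q)`, creates the inversions `(q, b)`, and moves the descent from `q`
to `q + 1`; the net effect is to multiply the weight by exactly `x`. Every permutation of `Fin (m+1)` is
uniquely `ρ^k ∘ ι(u)` with `k ≤ m`, where `ι(u)` extends `u ∈ S_m` by fixing the last
point, and `ι(u)` has the weight of `u` with `x` replaced by `p x`. Hence the numerator factors as
`∏_{j<n} (1 + y_j + ⋯ + y_j^{n-j-1})` with `y_j = p^j x`, and
`(1 - y_j)(1 + ⋯ + y_j^{n-j-1}) = 1 - p^{j(n-j)} x^{n-j}` turns the denominator of the left side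
into the product of the numerator and the denominator of the right side.
-/

open Equiv

theorem permLength_eq_sum (n : ℕ) (w : Perm (Fin n)) :
    permLength n w = ∑ a, ∑ b, if a < b ∧ w b < w a then 1 else 0 := by
  rw [permLength, card_filter, ← Fintype.sum_prod_type']

theorem permLength_inv {n : ℕ} (w : Perm (Fin n)) : permLength n w⁻¹ = permLength n w := by
  unfold permLength
  refine card_nbij' (fun pr => (w⁻¹ pr.2, w⁻¹ pr.1)) (fun pr => (w pr.2, w pr.1))
    ?_ ?_ ?_ ?_ <;> intro pr hpr <;> simp_all

theorem card_filter_lt_and_snd_eq {n : ℕ} (q : Fin n) :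
    #{pr : Fin n × Fin n | pr.1 < pr.2 ∧ pr.2 = q} = q := by
  rw [show ({pr : Fin n × Fin n | pr.1 < pr.2 ∧ pr.2 = q} : Finset _) = Iio q ×ˢ {q} by
    ext ⟨a, b⟩
    simp only [mem_filter, mem_univ, true_and, mem_product, mem_Iio, mem_singleton]
    constructor <;> rintro ⟨h, rfl⟩ <;> exact ⟨h, rfl⟩]
  simp

theorem card_filter_lt_and_fst_eq {n : ℕ} (q : Fin n) :
    #{pr : Fin n × Fin n | pr.1 < pr.2 ∧ pr.1 = q} = n - 1 - q := by
  rw [show ({pr : Fin n × Fin n | pr.1 < pr.2 ∧ pr.1 = q} : Finset _) = {q} ×ˢ Ioi q by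
    ext ⟨a, b⟩
    simp only [mem_filter, mem_univ, true_and, mem_product, mem_Ioi, mem_singleton]
    constructor
    · rintro ⟨h, rfl⟩; exact ⟨rfl, h⟩
    · rintro ⟨rfl, h⟩; exact ⟨h, rfl⟩]
  simp

def descent (n : ℕ) (v : Perm (Fin n)) (i : ℕ) : ℕ :=
  if h : 1 ≤ i ∧ i + 1 ≤ n then
    (if v ⟨i, by omega⟩ < v ⟨i - 1, by omega⟩ then 1 else 0)
  else 0

theorem nu_eq_descent_inv (n : ℕ) (w : Perm (Fin n)) (i : ℕ) : nu n w i = descent n w⁻¹ i :=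
  rfl

theorem descent_eq_ite {n i : ℕ} (v : Perm (Fin n)) (h₁ : 1 ≤ i) (h₂ : i + 1 ≤ n) :
    descent n v i = if v ⟨i, by omega⟩ < v ⟨i - 1, by omega⟩ then 1 else 0 :=
  dif_pos ⟨h₁, h₂⟩

theorem descent_eq_zero_of_le {n i : ℕ} (v : Perm (Fin n)) (h : n ≤ i) : descent n v i = 0 :=
  dif_neg (by omega)

theorem prod_pow_ite_eq_of_map_zero {M : Type*} [CommMonoid M] {f : ℕ → M} (hf : f 0 = 1)
    {m j : ℕ} (hj : j ≤ m) : ∏ i ∈ Icc 1 m, f i ^ (if i = j then 1 else 0) = f j := by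
  simp only [pow_ite, pow_one, pow_zero, prod_ite_eq', mem_Icc]
  rcases Nat.eq_zero_or_pos j with rfl | hj0
  · simp [hf]
  · simp [hj0.ne', hj]

section Weight

variable {K : Type*} [Field K]

def heyFactor (n : ℕ) (p x : K) (i : ℕ) : K := p ^ (i * (n - i)) * x ^ i

/-- With `x = p ^ (-t)`, `heyWeight n p x w⁻¹` is the summand at `w` of the numerator. -/
def heyWeight (n : ℕ) (p x : K) (v : Perm (Fin n)) : K :=
  p⁻¹ ^ permLength n v * ∏ i ∈ Icc 1 (n - 1), heyFactor n p x i ^ descent n v i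

theorem heyFactor_zero (n : ℕ) (p x : K) : heyFactor n p x 0 = 1 := by
  simp [heyFactor]

theorem heyFactor_succ (m : ℕ) (p x : K) {i : ℕ} (hi : i ≤ m) :
    heyFactor (m + 1) p x i = heyFactor m p (p * x) i := by
  rw [heyFactor, heyFactor, show m + 1 - i = m - i + 1 by omega]
  ring

theorem inv_pow_mul_heyFactor_succ {p : K} (hp : p ≠ 0) (x : K) {m q : ℕ} (hq : q ≤ m) :
    p⁻¹ ^ (m - q) * heyFactor (m + 1) p x (q + 1)
      = x * (p⁻¹ ^ q * heyFactor (m + 1) p x q) := by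
  obtain ⟨k, rfl⟩ := Nat.exists_eq_add_of_le hq
  simp only [heyFactor, show q + k + 1 - (q + 1) = k by omega, show q + k + 1 - q = k + 1 by omega,
    show q + k - q = k by omega, inv_pow]
  field_simp
  ring

theorem prod_pow_descent_of_le {n N : ℕ} (f : ℕ → K) (v : Perm (Fin n)) (h : n - 1 ≤ N) :
    ∏ i ∈ Icc 1 N, f i ^ descent n v i = ∏ i ∈ Icc 1 (n - 1), f i ^ descent n v i := by
  refine (prod_subset (Icc_subset_Icc_right h) fun i hi hi' => ?_).symm
  simp only [mem_Icc] at hi hi'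
  rw [descent_eq_zero_of_le v (by omega), pow_zero]

end Weight

section Rotation

variable {m : ℕ}

theorem finRotate_symm_zero : (finRotate (m + 1)).symm 0 = Fin.last m := by
  rw [Equiv.symm_apply_eq, finRotate_last]

theorem finRotate_symm_lt_last {a : Fin (m + 1)} (ha : a ≠ 0) :
    (finRotate (m + 1)).symm a < Fin.last m := by
  rw [Fin.lt_def, coe_finRotate_symm_of_ne_zero ha, Fin.val_last]
  have := a.isLt
  omega

theorem finRotate_symm_lt_finRotate_symm {a b : Fin (m + 1)} (ha : a ≠ 0) (hb : b ≠ 0) :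
    (finRotate (m + 1)).symm a < (finRotate (m + 1)).symm b ↔ a < b := by
  rw [Fin.lt_def, Fin.lt_def, coe_finRotate_symm_of_ne_zero ha, coe_finRotate_symm_of_ne_zero hb]
  have := Fin.val_ne_zero_iff.mpr ha
  omega

theorem coe_finRotate_symm_pow_last {k : ℕ} (hk : k ≤ m) :
    (((finRotate (m + 1)).symm ^ k) (Fin.last m) : ℕ) = m - k := by
  induction k with
  | zero => simp
  | succ k ih =>
    have hne : ((finRotate (m + 1)).symm ^ k) (Fin.last m) ≠ 0 := by
      rw [Ne, Fin.ext_iff, ih (by omega), Fin.val_zero]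
      omega
    rw [pow_succ', Perm.mul_apply, coe_finRotate_symm_of_ne_zero hne, ih (by omega)]
    omega

theorem descent_finRotate_symm_mul (v : Perm (Fin (m + 1))) {i : ℕ} (hi : i ∈ Icc 1 m) :
    descent (m + 1) ((finRotate (m + 1)).symm * v) i + (if i = (v⁻¹ 0 : ℕ) then 1 else 0)
      = descent (m + 1) v i + (if i = (v⁻¹ 0 : ℕ) + 1 then 1 else 0) := by
  rw [mem_Icc] at hi
  rw [descent_eq_ite _ hi.1 (by omega), descent_eq_ite _ hi.1 (by omega), Perm.mul_apply,
    Perm.mul_apply]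
  set a : Fin (m + 1) := ⟨i, by omega⟩
  set b : Fin (m + 1) := ⟨i - 1, by omega⟩
  have hv (c : Fin (m + 1)) : v c = 0 ↔ (c : ℕ) = v⁻¹ 0 := by
    rw [← Perm.eq_inv_iff_eq, Fin.ext_iff]
  by_cases ha : v a = 0
  · have hq : i = v⁻¹ 0 := (hv a).1 ha
    have hb : v b ≠ 0 := fun hb => by have := (hv b).1 hb; simp only [b] at this; omega
    rw [ha, finRotate_symm_zero, if_neg (finRotate_symm_lt_last hb).not_gt,
      if_pos (Fin.pos_of_ne_zero hb), if_pos hq, if_neg (by omega)]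
  by_cases hb : v b = 0
  · have hq : i = (v⁻¹ 0 : ℕ) + 1 := by have := (hv b).1 hb; simp only [b] at this; omega
    rw [hb, finRotate_symm_zero, if_pos (finRotate_symm_lt_last ha), if_neg (Fin.not_lt_zero _),
      if_pos hq, if_neg (by omega)]
  · have hq : i ≠ v⁻¹ 0 := fun h => ha ((hv a).2 h)
    have hq' : i ≠ (v⁻¹ 0 : ℕ) + 1 := fun h => hb ((hv b).2 (by simp only [b]; omega))
    simp only [finRotate_symm_lt_finRotate_symm ha hb, if_neg hq, if_neg hq']

theorem permLength_finRotate_symm_mul (v : Perm (Fin (m + 1))) :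
    permLength (m + 1) ((finRotate (m + 1)).symm * v) + v⁻¹ 0
      = permLength (m + 1) v + (m - v⁻¹ 0) := by
  set q := v⁻¹ 0
  have hv (a : Fin (m + 1)) : v a = 0 ↔ a = q := Perm.eq_inv_iff_eq.symm
  have hright := card_filter_lt_and_fst_eq q
  rw [Nat.add_sub_cancel] at hright
  -- the inversions of `ρ v` together with the pairs `(a, q)` are
  -- the inversions of `v` together with the pairs `(q, b)`
  rw [← hright, ← card_filter_lt_and_snd_eq q, permLength, permLength,
    ← card_union_of_disjoint, ← card_union_of_disjoint, ← filter_or, ← filter_or]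
  · congr 1
    ext ⟨a, b⟩
    simp only [mem_filter, mem_univ, true_and, Perm.mul_apply, ← and_or_left]
    refine and_congr_right fun hab => ?_
    by_cases ha : v a = 0
    · have hb : v b ≠ 0 := fun hb => hab.ne (v.injective (ha.trans hb.symm))
      rw [ha, finRotate_symm_zero]
      exact iff_of_true (Or.inl (finRotate_symm_lt_last hb)) (Or.inr ((hv a).1 ha))
    by_cases hb : v b = 0
    · rw [hb, finRotate_symm_zero]
      exact iff_of_true (Or.inr ((hv b).1 hb)) (Or.inl (Fin.pos_of_ne_zero ha))
    · rw [finRotate_symm_lt_finRotate_symm hb ha]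
      simp only [(hv a).not.1 ha, (hv b).not.1 hb, or_false]
  · refine disjoint_filter.2 fun ⟨a, b⟩ _ h h' => ?_
    rw [(hv a).2 h'.2] at h
    exact Fin.not_lt_zero _ h.2
  · refine disjoint_filter.2 fun ⟨a, b⟩ _ h h' => ?_
    rw [Perm.mul_apply, Perm.mul_apply, (hv b).2 h'.2, finRotate_symm_zero] at h
    exact (Fin.le_last _).not_gt h.2

variable {K : Type*} [Field K] {p x : K}

theorem heyWeight_finRotate_symm_mul (hp : p ≠ 0) (hx : x ≠ 0) {v : Perm (Fin (m + 1))}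
    (hv : v (Fin.last m) ≠ 0) :
    heyWeight (m + 1) p x ((finRotate (m + 1)).symm * v) = x * heyWeight (m + 1) p x v := by
  set q : ℕ := ((v⁻¹ 0 : Fin (m + 1)) : ℕ)
  have hqm : q < m := by
    have : v⁻¹ 0 ≠ Fin.last m := fun h => hv (by rw [← h]; simp)
    exact Fin.val_lt_last this
  set X := heyFactor (m + 1) p x
  set v' := (finRotate (m + 1)).symm * v
  simp only [heyWeight, Nat.add_sub_cancel]
  set P' := ∏ i ∈ Icc 1 m, X i ^ descent (m + 1) v' i
  set P := ∏ i ∈ Icc 1 m, X i ^ descent (m + 1) v i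
  have hprod : P' * X q = P * X (q + 1) := by
    rw [← prod_pow_ite_eq_of_map_zero (f := X) (heyFactor_zero _ p x) hqm.le,
      ← prod_pow_ite_eq_of_map_zero (f := X) (heyFactor_zero _ p x) hqm, ← prod_mul_distrib,
      ← prod_mul_distrib]
    exact prod_congr rfl fun i hi => by
      rw [← pow_add, ← pow_add, descent_finRotate_symm_mul v hi]
  have hne : p⁻¹ ^ q * X q ≠ 0 := by
    simp [X, heyFactor, hp, hx]
  apply mul_right_cancel₀ hne
  calc p⁻¹ ^ permLength (m + 1) v' * P' * (p⁻¹ ^ q * X q)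
      = p⁻¹ ^ (permLength (m + 1) v' + q) * (P' * X q) := by ring
    _ = p⁻¹ ^ (permLength (m + 1) v + (m - q)) * (P * X (q + 1)) := by
      rw [permLength_finRotate_symm_mul, hprod]
    _ = p⁻¹ ^ permLength (m + 1) v * P * (p⁻¹ ^ (m - q) * X (q + 1)) := by ring
    _ = x * (p⁻¹ ^ permLength (m + 1) v * P) * (p⁻¹ ^ q * X q) := by
      rw [inv_pow_mul_heyFactor_succ hp x hqm.le]; ring

end Rotation

section Extension

variable {m : ℕ}

def permCastSucc (u : Perm (Fin m)) : Perm (Fin (m + 1)) :=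
  u.viaFintypeEmbedding Fin.castSuccEmb

@[simp]
theorem permCastSucc_castSucc (u : Perm (Fin m)) (i : Fin m) :
    permCastSucc u i.castSucc = (u i).castSucc :=
  Perm.viaFintypeEmbedding_apply_image u Fin.castSuccEmb i

@[simp]
theorem permCastSucc_last (u : Perm (Fin m)) : permCastSucc u (Fin.last m) = Fin.last m :=
  Perm.viaFintypeEmbedding_apply_notMem_range u Fin.castSuccEmb (by simp)

theorem permCastSucc_injective : Function.Injective (permCastSucc (m := m)) := fun u w h =>
  Equiv.ext fun i => Fin.castSucc_injective _ (by simpa using congr($h i.castSucc))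

theorem permLength_permCastSucc (u : Perm (Fin m)) :
    permLength (m + 1) (permCastSucc u) = permLength m u := by
  rw [permLength_eq_sum, permLength_eq_sum]
  simp only [Fin.sum_univ_castSucc (n := m), permCastSucc_castSucc, permCastSucc_last,
    Fin.castSucc_lt_castSucc_iff]
  simp [Fin.castSucc_lt_last, (Fin.le_last _).not_gt]

theorem descent_permCastSucc (u : Perm (Fin m)) (i : ℕ) :
    descent (m + 1) (permCastSucc u) i = descent m u i := by
  by_cases hi : 1 ≤ i ∧ i + 1 ≤ m
  · rw [descent_eq_ite _ hi.1 (by omega), descent_eq_ite _ hi.1 hi.2]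
    change (if permCastSucc u (Fin.castSucc ⟨i, hi.2⟩) <
      permCastSucc u (Fin.castSucc ⟨i - 1, by omega⟩) then 1 else 0) = _
    simp only [permCastSucc_castSucc, Fin.castSucc_lt_castSucc_iff]
  rw [show descent m u i = 0 from dif_neg hi]
  by_cases hm : 1 ≤ i ∧ i = m
  · obtain ⟨hi1, rfl⟩ := hm
    rw [descent_eq_ite _ hi1 le_rfl]
    change (if permCastSucc u (Fin.last i) < permCastSucc u (Fin.castSucc ⟨i - 1, by omega⟩)
      then 1 else 0) = 0
    rw [permCastSucc_last, if_neg (Fin.le_last _).not_gt]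
  · exact dif_neg (by omega)

variable {K : Type*} [Field K]

theorem heyWeight_permCastSucc (p x : K) (u : Perm (Fin m)) :
    heyWeight (m + 1) p x (permCastSucc u) = heyWeight m p (p * x) u := by
  rw [heyWeight, heyWeight, permLength_permCastSucc, Nat.add_sub_cancel,
    ← prod_pow_descent_of_le _ u (Nat.sub_le m 1)]
  congr 1
  refine prod_congr rfl fun i hi => ?_
  rw [descent_permCastSucc, heyFactor_succ m p x (mem_Icc.1 hi).2]

theorem heyWeight_finRotate_symm_pow_mul {p x : K} (hp : p ≠ 0) (hx : x ≠ 0) {k : ℕ}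
    (hk : k ≤ m) (u : Perm (Fin m)) :
    heyWeight (m + 1) p x ((finRotate (m + 1)).symm ^ k * permCastSucc u)
      = x ^ k * heyWeight m p (p * x) u := by
  induction k with
  | zero => simp [heyWeight_permCastSucc]
  | succ k ih =>
    have hlast : ((finRotate (m + 1)).symm ^ k * permCastSucc u) (Fin.last m) ≠ 0 := by
      rw [Perm.mul_apply, permCastSucc_last, Ne, Fin.ext_iff,
        coe_finRotate_symm_pow_last (by omega), Fin.val_zero]
      omega
    rw [pow_succ', mul_assoc, heyWeight_finRotate_symm_mul hp hx hlast, ih (by omega), pow_succ']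
    ring

theorem bijective_finRotate_symm_pow_mul_permCastSucc :
    Function.Bijective fun ku : Fin (m + 1) × Perm (Fin m) =>
      (finRotate (m + 1)).symm ^ (ku.1 : ℕ) * permCastSucc ku.2 := by
  refine (Fintype.bijective_iff_injective_and_card _).2 ⟨fun ⟨k, u⟩ ⟨l, w⟩ h => ?_, ?_⟩
  · have hkl : k = l := by
      have := congr(($h (Fin.last m) : ℕ))
      simp only [Perm.mul_apply, permCastSucc_last] at this
      rw [coe_finRotate_symm_pow_last (Fin.is_le k),
        coe_finRotate_symm_pow_last (Fin.is_le l)] at this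
      exact Fin.ext (by have := Fin.is_le k; have := Fin.is_le l; omega)
    subst hkl
    exact congrArg _ (permCastSucc_injective (mul_left_cancel h))
  · simp [Fintype.card_perm, Nat.factorial_succ]

theorem sum_heyWeight_succ {p x : K} (hp : p ≠ 0) (hx : x ≠ 0) :
    ∑ v : Perm (Fin (m + 1)), heyWeight (m + 1) p x v
      = (∑ k ∈ range (m + 1), x ^ k) * ∑ u : Perm (Fin m), heyWeight m p (p * x) u := by
  rw [← Fintype.sum_bijective _ bijective_finRotate_symm_pow_mul_permCastSucc _ _ fun _ => rfl,
    Fintype.sum_prod_type, ← Fin.sum_univ_eq_sum_range, sum_mul]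
  exact sum_congr rfl fun k _ => by
    rw [mul_sum]
    exact sum_congr rfl fun u _ => heyWeight_finRotate_symm_pow_mul hp hx (Fin.is_le k) u

theorem sum_heyWeight {p : K} (hp : p ≠ 0) (n : ℕ) {x : K} (hx : x ≠ 0) :
    ∑ v : Perm (Fin n), heyWeight n p x v
      = ∏ j ∈ range n, ∑ k ∈ range (n - j), (p ^ j * x) ^ k := by
  induction n generalizing x with
  | zero => simp [heyWeight, permLength]
  | succ m ih =>
    rw [sum_heyWeight_succ hp hx, ih (mul_ne_zero hp hx), prod_range_succ' _ m, mul_comm]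
    simp only [pow_succ, Nat.add_sub_add_right, pow_zero, one_mul, Nat.sub_zero, mul_assoc]

end Extension

theorem sum_heyWeight_mul_prod {K : Type*} [Field K] {p : K} (hp : p ≠ 0) (n : ℕ) {x : K}
    (hx : x ≠ 0) :
    (∑ v : Perm (Fin n), heyWeight n p x v) * ∏ i ∈ Icc 1 n, (1 - p ^ (i - 1) * x)
      = ∏ i ∈ Icc 1 n, (1 - heyFactor n p x i) := by
  have hshift : ∏ i ∈ Icc 1 n, (1 - p ^ (i - 1) * x) = ∏ j ∈ range n, (1 - p ^ j * x) :=
    prod_nbij' (· - 1) (· + 1) (by intro i; simp; omega) (by intro j; simp)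
      (by intro i; simp; omega) (by intro j; simp) fun _ _ => rfl
  have hreflect : ∏ j ∈ range n, (1 - (p ^ j * x) ^ (n - j))
      = ∏ i ∈ Icc 1 n, (1 - heyFactor n p x i) :=
    prod_nbij' (n - ·) (n - ·) (by intro j; simp; omega) (by intro i; simp; omega)
      (by intro j; simp; omega) (by intro i; simp; omega) fun j hj => by
        rw [heyFactor, Nat.sub_sub_self (mem_range.1 hj).le, mul_pow, ← pow_mul, mul_comm j]
  rw [sum_heyWeight hp n hx, hshift, ← prod_mul_distrib, ← hreflect]
  exact prod_congr rfl fun j _ => geom_sum_mul_neg _ _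

theorem sum_heyWeight_div_prod {K : Type*} [Field K] [LinearOrder K] [IsStrictOrderedRing K]
    {p x : K} (hp : 0 < p) (hx : 0 < x) (n : ℕ) :
    (∑ v : Perm (Fin n), heyWeight n p x v) / ∏ i ∈ Icc 1 n, (1 - heyFactor n p x i)
      = 1 / ∏ i ∈ Icc 1 n, (1 - p ^ (i - 1) * x) := by
  have hpos : 0 < ∑ v : Perm (Fin n), heyWeight n p x v :=
    sum_pos (fun v _ => by unfold heyWeight heyFactor; positivity) univ_nonempty
  rw [← sum_heyWeight_mul_prod hp.ne' n hx.ne', div_mul_cancel_left₀ hpos.ne', one_div]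

theorem rpow_eq_heyFactor {p : ℝ} (hp : 0 < p) (t : ℝ) {n i : ℕ} (hi : i ≤ n) :
    p ^ ((i : ℝ) * ((n : ℝ) - i) - i * t) = heyFactor n p (p ^ (-t)) i := by
  rw [heyFactor, ← Real.rpow_natCast, ← Real.rpow_natCast (p ^ (-t)), ← Real.rpow_mul hp.le,
    ← Real.rpow_add hp]
  push_cast [hi]
  ring_nf

theorem rpow_sub_one_sub {p : ℝ} (hp : 0 < p) (t : ℝ) {i : ℕ} (hi : 1 ≤ i) :
    p ^ ((i : ℝ) - 1 - t) = p ^ (i - 1) * p ^ (-t) := by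
  rw [← Real.rpow_natCast, ← Real.rpow_add hp]
  push_cast [hi]
  ring_nf

theorem sum_rpow_nu_eq_sum_heyWeight {p : ℝ} (hp : 0 < p) (n : ℕ) (t : ℝ) :
    ∑ w : Perm (Fin n), p ^ (-(permLength n w : ℝ)) *
        ∏ i ∈ Icc 1 (n - 1), (p ^ ((i : ℝ) * ((n : ℝ) - i) - i * t)) ^ nu n w i
      = ∑ v : Perm (Fin n), heyWeight n p (p ^ (-t)) v := by
  refine Fintype.sum_equiv (Equiv.inv _) _ _ fun w => ?_
  rw [Equiv.inv_apply, heyWeight, permLength_inv, Real.rpow_neg hp.le, Real.rpow_natCast, inv_pow]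
  congr 1
  refine prod_congr rfl fun i hi => ?_
  rw [rpow_eq_heyFactor hp t (by simp at hi; omega), nu_eq_descent_inv]

theorem stmt_9_general (n : ℕ) (p : ℕ) (hp : p.Prime) (t : ℝ) :
    (∑ w : Equiv.Perm (Fin n), (p : ℝ) ^ (-(permLength n w : ℝ)) *
        ∏ i ∈ Finset.Icc 1 (n - 1),
          ((p : ℝ) ^ ((i : ℝ) * ((n : ℝ) - i) - i * t)) ^ (nu n w i))
      / ∏ i ∈ Finset.Icc 1 n, (1 - (p : ℝ) ^ ((i : ℝ) * ((n : ℝ) - i) - i * t))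
    = 1 / ∏ i ∈ Finset.Icc 1 n, (1 - (p : ℝ) ^ ((i : ℝ) - 1 - t)) := by
  have hp0 : (0 : ℝ) < p := by exact_mod_cast hp.pos
  have hden : ∏ i ∈ Icc 1 n, (1 - (p : ℝ) ^ ((i : ℝ) * ((n : ℝ) - i) - i * t))
      = ∏ i ∈ Icc 1 n, (1 - heyFactor n (p : ℝ) ((p : ℝ) ^ (-t)) i) :=
    prod_congr rfl fun i hi => by rw [rpow_eq_heyFactor hp0 t (mem_Icc.1 hi).2]
  have hden' : ∏ i ∈ Icc 1 n, (1 - (p : ℝ) ^ ((i : ℝ) - 1 - t))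
      = ∏ i ∈ Icc 1 n, (1 - (p : ℝ) ^ (i - 1) * (p : ℝ) ^ (-t)) :=
    prod_congr rfl fun i hi => by rw [rpow_sub_one_sub hp0 t (mem_Icc.1 hi).1]
  rw [sum_rpow_nu_eq_sum_heyWeight hp0, hden, hden']
  exact sum_heyWeight_div_prod hp0 (Real.rpow_pos_of_pos hp0 _) n

/-- Hey's formula via the `p`-adic Bruhat decomposition: the rational-function identity
`(∑_{w∈Sym(n)} p^{−ℓ(w)} ∏_{i=1}^{n−1} (p^{i(n−i)−it})^{ν_i(w)}) / ∏_{i=1}^{n}(1−p^{i(n−i)−it})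
  = 1 / ∏_{i=1}^{n} (1 − p^{i−1−t})`,
valid at every real `t` where all denominator factors are nonzero. -/
theorem stmt_9 (n : ℕ) (hn : 1 ≤ n) (p : ℕ) (hp : p.Prime) (t : ℝ)
    (hden1 : ∀ i ∈ Finset.Icc 1 n, (1 : ℝ) - (p : ℝ) ^ ((i : ℝ) * ((n : ℝ) - i) - i * t) ≠ 0)
    (hden2 : ∀ i ∈ Finset.Icc 1 n, (1 : ℝ) - (p : ℝ) ^ ((i : ℝ) - 1 - t) ≠ 0) :
    (∑ w : Equiv.Perm (Fin n), (p : ℝ) ^ (-(permLength n w : ℝ)) *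
        ∏ i ∈ Finset.Icc 1 (n - 1),
          ((p : ℝ) ^ ((i : ℝ) * ((n : ℝ) - i) - i * t)) ^ (nu n w i))
      / ∏ i ∈ Finset.Icc 1 n, (1 - (p : ℝ) ^ ((i : ℝ) * ((n : ℝ) - i) - i * t))
    = 1 / ∏ i ∈ Finset.Icc 1 n, (1 - (p : ℝ) ^ ((i : ℝ) - 1 - t)) :=
  stmt_9_general n p hp t
end

section
/- For every integer n ≥ 2, the limit as m → ∞ of ( n·(C(m+n−2, n−1) + C(m+n−1, n−1)) + C(2m+n−2, n−1) + 1 ) / ( C(m+n−1, n−1) + n ) equals 2n + 2^{n−1}. -/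
/-! Since `C(N, k) ~ N^k / k!` as `N → ∞`, after dividing numerator and denominator by
`m^(n-1) / (n-1)!` the three binomial coefficients tend to `1`, `1` and `2^(n-1)`, while the
constant terms tend to `0`. -/

open Filter Topology Asymptotics
open scoped Nat

lemma tendsto_choose_div_pow_div_factorial {α : Type*} {l : Filter α} {u : α → ℕ} {x : α → ℝ}
    {c : ℝ} (k : ℕ) (hu : Tendsto u l atTop) (hux : Tendsto (fun a ↦ (u a : ℝ) / x a) l (𝓝 c)) :
    Tendsto (fun a ↦ ((u a).choose k : ℝ) / (x a ^ k / k !)) l (𝓝 (c ^ k)) := by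
  have hequiv : (fun a ↦ ((u a).choose k : ℝ) / (x a ^ k / k !)) ~[l]
      fun a ↦ ((u a : ℝ) / x a) ^ k := by
    refine (((isEquivalent_choose k).comp_tendsto hu).div IsEquivalent.refl).congr_right ?_
    filter_upwards with a
    simp [div_div_div_cancel_right₀ (show (k ! : ℝ) ≠ 0 by positivity), div_pow]
  exact hequiv.tendsto_nhds_iff.mpr (hux.pow k)

lemma tendsto_natCast_mul_add_div_self (a b : ℕ) :
    Tendsto (fun m : ℕ ↦ ((a * m + b : ℕ) : ℝ) / m) atTop (𝓝 a) := by
  have h : Tendsto (fun m : ℕ ↦ (a : ℝ) + b / m) atTop (𝓝 (a + 0)) :=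
    tendsto_const_nhds.add (tendsto_const_div_atTop_nhds_zero_nat _)
  rw [add_zero] at h
  refine h.congr' ?_
  filter_upwards [eventually_ne_atTop 0] with m hm
  push_cast
  field_simp

lemma tendsto_choose_mul_add_div_pow_div_factorial {a : ℕ} (b k : ℕ) (ha : 0 < a) :
    Tendsto (fun m : ℕ ↦ ((a * m + b).choose k : ℝ) / ((m : ℝ) ^ k / k !)) atTop
      (𝓝 ((a : ℝ) ^ k)) :=
  tendsto_choose_div_pow_div_factorial k
    (tendsto_atTop_mono (fun m ↦ le_add_right (Nat.le_mul_of_pos_left m ha)) tendsto_id)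
    (tendsto_natCast_mul_add_div_self a b)

/-- `lim_{m→∞} ( n(C(m+n−2,n−1)+C(m+n−1,n−1)) + C(2m+n−2,n−1) + 1 ) / ( C(m+n−1,n−1) + n )
    = 2n + 2^{n−1}` for `n ≥ 2`. -/
theorem stmt_11 (n : ℕ) (hn : 2 ≤ n) :
    Tendsto (fun m : ℕ =>
        ((n * (Nat.choose (m + n - 2) (n - 1) + Nat.choose (m + n - 1) (n - 1))
            + Nat.choose (2 * m + n - 2) (n - 1) + 1 : ℕ) : ℝ)
          / ((Nat.choose (m + n - 1) (n - 1) + n : ℕ) : ℝ))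
      atTop (nhds ((2 * n : ℝ) + 2 ^ (n - 1))) := by
  obtain ⟨p, rfl⟩ : ∃ p, n = p + 2 := ⟨n - 2, by omega⟩
  set g : ℕ → ℝ := fun m ↦ (m : ℝ) ^ (p + 1) / (p + 1)!
  have hg : Tendsto g atTop atTop :=
    ((tendsto_pow_atTop (by omega)).comp tendsto_natCast_atTop_atTop).atTop_div_const
      (by positivity)
  have hconst (c : ℝ) : Tendsto (fun m ↦ c / g m) atTop (𝓝 0) := tendsto_const_nhds.div_atTop hg
  have h1 := tendsto_choose_mul_add_div_pow_div_factorial p (p + 1) one_pos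
  have h2 := tendsto_choose_mul_add_div_pow_div_factorial (p + 1) (p + 1) one_pos
  have h3 := tendsto_choose_mul_add_div_pow_div_factorial p (p + 1) two_pos
  have hnum := (((h1.add h2).const_mul ((p + 2 : ℕ) : ℝ)).add h3).add (hconst 1)
  have hden := h2.add (hconst ((p + 2 : ℕ) : ℝ))
  convert (hnum.div hden (by simp)).congr' ?_ using 2
  · push_cast; ring
  filter_upwards [eventually_ne_atTop 0] with m hm
  simp only [Pi.div_apply, g, one_mul, show m + (p + 2) - 2 = m + p by omega,
    show m + (p + 2) - 1 = m + (p + 1) by omega, show 2 * m + (p + 2) - 2 = 2 * m + p by omega,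
    show p + 2 - 1 = p + 1 by omega]
  push_cast
  field_simp
end

section
/- For every integer m ≥ 30, the polynomial g_m(t) = m!·t·∏_{i=m−1}^{2m−2}(t+i) − (2m−1)!·(t−1) ∈ ℤ[t] has non-negative coefficients. In particular, the coefficient of t in g_m equals (m² − 3m + 1)·(2m−2)! ≥ 0 and the constant coefficient equals (2m−1)!. -/
/-!
For `k ≥ 2` the coefficient of `t^k` in `g_m` is `m!` times a coefficient of a product of factors
`t + i` with `i ≥ 0`, hence non-negative. Only the two lowest coefficients see the subtracted term:
the constant one is `(2m-1)!`, and since `∏_{i=m-1}^{2m-2} i = (2m-2)!/(m-2)!`, the coefficient of `t`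
is `m(m-1)(2m-2)! - (2m-1)(2m-2)! = (m² - 3m + 1)(2m-2)!`, non-negative as soon as `m ≥ 3`.
-/

open Polynomial Finset
open scoped Nat

theorem Nat.factorial_mul_prod_Icc {a b : ℕ} (hab : a ≤ b) :
    a ! * ∏ i ∈ Icc (a + 1) b, i = b ! := by
  induction b, hab using Nat.le_induction with
  | base => simp
  | succ b hab ih => rw [prod_Icc_succ_top (by omega), ← mul_assoc, ih, Nat.factorial_succ, mul_comm]

theorem Nat.factorial_mul_prod_Icc_sub_one_two_mul_sub_two {m : ℕ} (hm : 2 ≤ m) :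
    m ! * ∏ i ∈ Icc (m - 1) (2 * m - 2), i = m * (m - 1) * (2 * m - 2)! := by
  obtain ⟨n, rfl⟩ := Nat.exists_eq_add_of_le' hm
  rw [show n + 2 - 1 = n + 1 by omega, show 2 * (n + 2) - 2 = 2 * n + 2 by omega,
    ← factorial_mul_prod_Icc (a := n) (b := 2 * n + 2) (by omega), factorial_succ (n + 1),
    factorial_succ n]
  ring

namespace Polynomial

theorem coeff_prod_X_add_C_natCast_nonneg {R ι : Type*} [CommSemiring R]
    [PartialOrder R] [IsOrderedRing R] (s : Finset ι) (a : ι → ℕ) (k : ℕ) :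
    0 ≤ (∏ i ∈ s, (X + C (a i : R))).coeff k := by
  have hmap : ∏ i ∈ s, (X + C (a i : R)) = (∏ i ∈ s, (X + C (a i))).map (Nat.castRingHom R) := by
    simp [Polynomial.map_prod]
  rw [hmap, coeff_map]
  exact Nat.cast_nonneg _

variable {R : Type*} [CommRing R] (a b : R) (p : R[X])

theorem coeff_C_mul_X_mul_sub_C_mul_X_sub_one_zero :
    (C a * X * p - C b * (X - 1)).coeff 0 = b := by
  simp [mul_assoc]

theorem coeff_C_mul_X_mul_sub_C_mul_X_sub_one_one :
    (C a * X * p - C b * (X - 1)).coeff 1 = a * p.coeff 0 - b := by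
  simp [mul_assoc, coeff_X, coeff_one]

theorem coeff_C_mul_X_mul_sub_C_mul_X_sub_one_add_two (k : ℕ) :
    (C a * X * p - C b * (X - 1)).coeff (k + 2) = a * p.coeff (k + 1) := by
  simp [mul_assoc, coeff_X, coeff_one]

end Polynomial

/-- For `m ≥ 30`, the polynomial `g_m(t) = m!·t·∏_{i=m−1}^{2m−2}(t+i) − (2m−1)!·(t−1)` has
non-negative coefficients; its coefficient of `t` is `(m²−3m+1)(2m−2)! ≥ 0` and its constant
coefficient is `(2m−1)!`. -/
theorem stmt_14 (m : ℕ) (hm : 30 ≤ m) (g : Polynomial ℤ)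
    (hg : g = C ((Nat.factorial m : ℤ)) * X * ∏ i ∈ Finset.Icc (m - 1) (2 * m - 2), (X + C (i : ℤ))
        - C ((Nat.factorial (2 * m - 1) : ℤ)) * (X - 1)) :
    (∀ k : ℕ, 0 ≤ g.coeff k) ∧
    g.coeff 1 = ((m : ℤ) ^ 2 - 3 * m + 1) * (Nat.factorial (2 * m - 2) : ℤ) ∧
    0 ≤ ((m : ℤ) ^ 2 - 3 * m + 1) * (Nat.factorial (2 * m - 2) : ℤ) ∧
    g.coeff 0 = (Nat.factorial (2 * m - 1) : ℤ) := by
  have hP0 : (∏ i ∈ Icc (m - 1) (2 * m - 2), (X + C (i : ℤ))).coeff 0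
      = ((∏ i ∈ Icc (m - 1) (2 * m - 2), i : ℕ) : ℤ) := by
    simp [coeff_zero_eq_eval_zero, eval_prod]
  have hcoeff1 : g.coeff 1 = ((m : ℤ) ^ 2 - 3 * m + 1) * (Nat.factorial (2 * m - 2) : ℤ) := by
    rw [hg, coeff_C_mul_X_mul_sub_C_mul_X_sub_one_one, hP0, ← Nat.cast_mul,
      Nat.factorial_mul_prod_Icc_sub_one_two_mul_sub_two (by omega),
      ← Nat.mul_factorial_pred (show 2 * m - 1 ≠ 0 by omega),
      show 2 * m - 1 - 1 = 2 * m - 2 by omega]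
    push_cast [show 1 ≤ m by omega, show 1 ≤ 2 * m by omega]
    ring
  have hnonneg : 0 ≤ ((m : ℤ) ^ 2 - 3 * m + 1) * (Nat.factorial (2 * m - 2) : ℤ) :=
    mul_nonneg (by nlinarith) (by positivity)
  have hcoeff0 : g.coeff 0 = (Nat.factorial (2 * m - 1) : ℤ) := by
    rw [hg, coeff_C_mul_X_mul_sub_C_mul_X_sub_one_zero]
  refine ⟨fun k => ?_, hcoeff1, hnonneg, hcoeff0⟩
  match k with
  | 0 => exact hcoeff0 ▸ by positivity
  | 1 => exact hcoeff1 ▸ hnonneg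
  | k + 2 =>
    rw [hg, coeff_C_mul_X_mul_sub_C_mul_X_sub_one_add_two]
    exact mul_nonneg (by positivity) (coeff_prod_X_add_C_natCast_nonneg _ _ _)
end

section
/- Let m ≥ 1, n ≥ 2, and let E = {e ∈ ℕ₀ⁿ : e₁+⋯+eₙ = m−1}, F = {f ∈ ℕ₀ⁿ : f₁+⋯+fₙ = m}. For any e, e' ∈ E and f, f' ∈ F with e + f = e' + f' (componentwise), there exists a chain (e,f) = (e₁,f₁), (e₂,f₂), …, (e_{δ+1}, f_{δ+1}) = (e',f') of pairs in E × F, of length δ = ∑_{i=1}^n |eᵢ − eᵢ'|, such that for any two consecutive terms (e_t, f_t), (e_{t+1}, f_{t+1}), the difference f_{t+1} − e_t = f_t − e_{t+1} is a standard basis vector of ℕ₀ⁿ, and e_t + f_t = e + f for all t. -/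
private lemma sum_step {n : ℕ} (i : Fin n) (p q : Fin n → ℕ)
    (h : ∀ j, p j + (if j = i then 1 else 0) = q j) :
    (∑ j, p j) + 1 = ∑ j, q j := by
  have h1 : ∑ j, q j = (∑ j, p j) + ∑ j, (if j = i then (1:ℕ) else 0) := by
    rw [← Finset.sum_add_distrib]
    exact Finset.sum_congr rfl fun j _ => (h j).symm
  rw [h1, Finset.sum_ite_eq' Finset.univ i (fun _ => (1:ℕ))]
  simp

private lemma chain_aux (m n : ℕ) (hm : 1 ≤ m) :
    ∀ δ : ℕ, ∀ e e' f f' : Fin n → ℕ,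
    (∑ i, e i = m - 1) → (∑ i, e' i = m - 1) →
    (∑ i, f i = m) → (∑ i, f' i = m) →
    (∀ i, e i + f i = e' i + f' i) →
    (∑ i, ((e i : ℤ) - (e' i : ℤ)).natAbs = δ) →
    ∃ c : ℕ → (Fin n → ℕ) × (Fin n → ℕ),
      c 0 = (e, f) ∧ c δ = (e', f') ∧
      (∀ t, t ≤ δ →
        (∑ i, (c t).1 i = m - 1) ∧ (∑ i, (c t).2 i = m) ∧
        (∀ j, (c t).1 j + (c t).2 j = e j + f j)) ∧
      (∀ t, t < δ →
        ∃ i : Fin n,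
          (∀ j, (c (t + 1)).2 j = (c t).1 j + (if j = i then 1 else 0)) ∧
          (∀ j, (c t).2 j = (c (t + 1)).1 j + (if j = i then 1 else 0))) := by
  intro δ
  induction δ using Nat.strong_induction_on with
  | _ δ IH =>
  intro e e' f f' he he' hf hf' hsum hδ
  by_cases hδ0 : δ = 0
  · subst hδ0
    have hee' : ∀ j, e j = e' j := by
      intro j
      have := Finset.sum_eq_zero_iff.mp hδ j (Finset.mem_univ j)
      omega
    have hff' : ∀ j, f j = f' j := fun j => by have h1 := hsum j; have h2 := hee' j; omega
    refine ⟨fun _ => (e, f), rfl, ?_, fun t _ => ⟨he, hf, fun j => rfl⟩, fun t ht => absurd ht (by omega)⟩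
    exact Prod.ext (funext fun j => hee' j) (funext fun j => hff' j)
  · -- δ ≠ 0 : find indices of both signs
    have hcastsum : (∑ j, (e j : ℤ)) = ∑ j, (e' j : ℤ) := by
      rw [← Nat.cast_sum, ← Nat.cast_sum, he, he']
    have hex : ∃ j, e j ≠ e' j := by
      by_contra h
      push_neg at h
      apply hδ0
      rw [← hδ]
      exact Finset.sum_eq_zero fun j _ => by rw [h j]; simp
    have hpos : ∃ j, e' j < e j := by
      by_contra h
      push_neg at h
      have h0 : ∀ j ∈ Finset.univ, (0:ℤ) ≤ (e' j : ℤ) - e j := fun j _ => by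
        have := h j; omega
      have hs0 : ∑ j, ((e' j : ℤ) - e j) = 0 := by
        rw [Finset.sum_sub_distrib, hcastsum, sub_self]
      obtain ⟨j, hj⟩ := hex
      have := (Finset.sum_eq_zero_iff_of_nonneg h0).mp hs0 j (Finset.mem_univ j)
      omega
    have hneg : ∃ j, e j < e' j := by
      by_contra h
      push_neg at h
      have h0 : ∀ j ∈ Finset.univ, (0:ℤ) ≤ (e j : ℤ) - e' j := fun j _ => by
        have := h j; omega
      have hs0 : ∑ j, ((e j : ℤ) - e' j) = 0 := by
        rw [Finset.sum_sub_distrib, hcastsum, sub_self]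
      obtain ⟨j, hj⟩ := hex
      have := (Finset.sum_eq_zero_iff_of_nonneg h0).mp hs0 j (Finset.mem_univ j)
      omega
    obtain ⟨ineg, hineg⟩ := hneg
    obtain ⟨ipos, hipos⟩ := hpos
    have hne : ineg ≠ ipos := by intro h; rw [h] at hineg; omega
    have hne' : ipos ≠ ineg := hne.symm
    have hfi : 1 ≤ f ineg := by have := hsum ineg; omega
    have hei : 1 ≤ e ipos := by omega
    set a1 : Fin n → ℕ := fun j => if j = ineg then f j - 1 else f j with ha1
    set b1 : Fin n → ℕ := fun j => if j = ineg then e j + 1 else e j with hb1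
    set e2 : Fin n → ℕ := fun j => if j = ineg then e j + 1 else if j = ipos then e j - 1 else e j with he2
    set f2 : Fin n → ℕ := fun j => if j = ineg then f j - 1 else if j = ipos then f j + 1 else f j with hf2
    have hsa1 : (∑ j, a1 j) + 1 = ∑ j, f j := by
      apply sum_step ineg
      intro j
      simp only [ha1]
      by_cases hj : j = ineg
      · subst hj; simp; omega
      · simp [hj]
    have hsb1 : (∑ j, e j) + 1 = ∑ j, b1 j := by
      apply sum_step ineg
      intro j
      simp only [hb1]
      by_cases hj : j = ineg
      · subst hj; simp
      · simp [hj]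
    have hse2 : (∑ j, e2 j) + 1 = ∑ j, b1 j := by
      apply sum_step ipos
      intro j
      simp only [he2, hb1]
      by_cases hj : j = ineg
      · subst hj; simp [hne]
      · by_cases hj2 : j = ipos
        · subst hj2; simp [hj]; omega
        · simp [hj, hj2]
    have hsf2 : (∑ j, a1 j) + 1 = ∑ j, f2 j := by
      apply sum_step ipos
      intro j
      simp only [ha1, hf2]
      by_cases hj : j = ineg
      · subst hj; simp [hne]
      · by_cases hj2 : j = ipos
        · subst hj2; simp [hj]
        · simp [hj, hj2]
    have hsume2 : ∑ j, e2 j = m - 1 := by omega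
    have hsumf2 : ∑ j, f2 j = m := by omega
    have hsuma1 : ∑ j, a1 j = m - 1 := by omega
    have hsumb1 : ∑ j, b1 j = m := by omega
    have hef2 : ∀ j, e2 j + f2 j = e j + f j := by
      intro j
      simp only [he2, hf2]
      by_cases hj : j = ineg
      · subst hj; simp; omega
      · by_cases hj2 : j = ipos
        · subst hj2; simp [hj]; omega
        · simp [hj, hj2]
    have hd2sum : (∑ j, ((e2 j : ℤ) - (e' j : ℤ)).natAbs) + 2 = δ := by
      rw [← hδ]
      have hcongr : ∀ j ∈ Finset.univ,
          ((e j : ℤ) - (e' j : ℤ)).natAbs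
            = ((e2 j : ℤ) - (e' j : ℤ)).natAbs
              + ((if j = ineg then 1 else 0) + (if j = ipos then 1 else 0)) := by
        intro j _
        simp only [he2]
        by_cases hj : j = ineg
        · subst hj; simp [hne]; omega
        · by_cases hj2 : j = ipos
          · subst hj2; simp [hj]; omega
          · simp [hj, hj2]
      rw [Finset.sum_congr rfl hcongr, Finset.sum_add_distrib, Finset.sum_add_distrib,
        Finset.sum_ite_eq' Finset.univ ineg (fun _ => (1:ℕ)),
        Finset.sum_ite_eq' Finset.univ ipos (fun _ => (1:ℕ))]
      simp
    set δ2 := δ - 2 with hd2def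
    have hd2lt : δ2 < δ := by omega
    have hd2 : ∑ j, ((e2 j : ℤ) - (e' j : ℤ)).natAbs = δ2 := by omega
    have hsum2 : ∀ i, e2 i + f2 i = e' i + f' i := fun i => by rw [hef2 i]; exact hsum i
    obtain ⟨c', hc0, hcδ, hinv, hstep⟩ :=
      IH δ2 hd2lt e2 e' f2 f' hsume2 he' hsumf2 hf' hsum2 hd2
    refine ⟨fun t => if t = 0 then (e, f) else if t = 1 then (a1, b1) else c' (t - 2),
      by simp, ?_, ?_, ?_⟩
    · have h1 : δ ≠ 0 := hδ0
      have h2 : δ ≠ 1 := by omega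
      simp only [h1, h2, if_false]
      exact hcδ
    · intro t ht
      match t with
      | 0 => exact ⟨he, hf, fun j => rfl⟩
      | 1 =>
        refine ⟨hsuma1, hsumb1, fun j => ?_⟩
        simp only [ha1, hb1]
        by_cases hj : j = ineg
        · subst hj; simp; omega
        · simp [hj, Nat.add_comm]
      | (t+2) =>
        have h1 : t + 2 ≠ 0 := by omega
        have h2 : t + 2 ≠ 1 := by omega
        simp only [h1, h2, if_false, Nat.add_sub_cancel]
        obtain ⟨i1, i2, i3⟩ := hinv t (by omega)
        exact ⟨i1, i2, fun j => by rw [i3 j, hef2 j]⟩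
    · intro t ht
      match t with
      | 0 =>
        refine ⟨ineg, fun j => ?_, fun j => ?_⟩
        · simp only [hb1]
          by_cases hj : j = ineg
          · subst hj; simp
          · simp [hj]
        · simp only [ha1]
          by_cases hj : j = ineg
          · subst hj; simp; omega
          · simp [hj]
      | 1 =>
        refine ⟨ipos, fun j => ?_, fun j => ?_⟩
        · simp only [show (1:ℕ)+1 ≠ 0 by omega, show (1:ℕ)+1 ≠ 1 by omega, if_false,
            show (1:ℕ)+1-2 = 0 from rfl, hc0]
          simp only [hf2, ha1]
          by_cases hj : j = ineg
          · subst hj; simp [hne]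
          · by_cases hj2 : j = ipos
            · subst hj2; simp [hj]
            · simp [hj, hj2]
        · simp only [show (1:ℕ)+1 ≠ 0 by omega, show (1:ℕ)+1 ≠ 1 by omega, if_false,
            show (1:ℕ)+1-2 = 0 from rfl, hc0]
          simp only [hb1, he2]
          by_cases hj : j = ineg
          · subst hj; simp [hne]
          · by_cases hj2 : j = ipos
            · subst hj2; simp [hj]; omega
            · simp [hj, hj2]
      | (t+2) =>
        obtain ⟨i, hi1, hi2⟩ := hstep t (by omega)
        have h1 : t + 2 ≠ 0 := by omega
        have h2 : t + 2 ≠ 1 := by omega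
        have h3 : t + 2 + 1 ≠ 0 := by omega
        have h4 : t + 2 + 1 ≠ 1 := by omega
        refine ⟨i, fun j => ?_, fun j => ?_⟩
        · simpa only [h1, h2, h3, h4, if_false, Nat.add_sub_cancel,
            show t + 2 + 1 - 2 = t + 1 by omega] using hi1 j
        · simpa only [h1, h2, h3, h4, if_false, Nat.add_sub_cancel,
            show t + 2 + 1 - 2 = t + 1 by omega] using hi2 j

/-- Chain lemma: given `e, e' ∈ E` (tuples in `ℕⁿ` summing to `m−1`) and `f, f' ∈ F`
(tuples summing to `m`) with `e + f = e' + f'` componentwise, there is a chain from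
`(e,f)` to `(e',f')` of length `δ = ∑ |eᵢ − eᵢ'|` in which consecutive terms differ by
moving a standard basis vector, and all terms lie in `E × F` with constant sum `e + f`. -/
theorem stmt_16 (m n : ℕ) (hm : 1 ≤ m) (hn : 2 ≤ n)
    (e e' f f' : Fin n → ℕ)
    (he : ∑ i, e i = m - 1) (he' : ∑ i, e' i = m - 1)
    (hf : ∑ i, f i = m) (hf' : ∑ i, f' i = m)
    (hsum : ∀ i, e i + f i = e' i + f' i) :
    ∃ c : ℕ → (Fin n → ℕ) × (Fin n → ℕ),
      c 0 = (e, f) ∧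
      c (∑ i, ((e i : ℤ) - (e' i : ℤ)).natAbs) = (e', f') ∧
      (∀ t, t ≤ ∑ i, ((e i : ℤ) - (e' i : ℤ)).natAbs →
        (∑ i, (c t).1 i = m - 1) ∧ (∑ i, (c t).2 i = m) ∧
        (∀ j, (c t).1 j + (c t).2 j = e j + f j)) ∧
      (∀ t, t < ∑ i, ((e i : ℤ) - (e' i : ℤ)).natAbs →
        ∃ i : Fin n,
          (∀ j, (c (t + 1)).2 j = (c t).1 j + (if j = i then 1 else 0)) ∧
          (∀ j, (c t).2 j = (c (t + 1)).1 j + (if j = i then 1 else 0))) :=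
  chain_aux m n hm _ e e' f f' he he' hf hf' hsum rfl
end
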